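/- Let P be a Poisson conformal superalgebra and let L be a parity-graded H-submodule of P closed under the λ-bracket, i.e., [L_λ L] ⊆ L[λ]. Then the map ρ̂_λ(a, x) = [a_λ x] + λ (a_λ x), for a ∈ L and x ∈ P, is a conformal representation of the Lie conformal superalgebra L on the H-module P. -/

import Mathlib

open Finsupp

noncomputable section

variable (k : Type) [Field k] [CharZero k]

section Base

variable {M N : Type} [AddCommGroup M] [Module k M] [AddCommGroup N] [Module k N]

/-- Multiplication by `λ` on `M[λ] := ℕ →₀ M`. -/
def lamMul : (ℕ →₀ M) →ₗ[k] (ℕ →₀ M) := Finsupp.lmapDomain M k Nat.succ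

/-- Apply a linear map to every coefficient of a polynomial. -/
def cw (f : M →ₗ[k] N) : (ℕ →₀ M) →ₗ[k] (ℕ →₀ N) := Finsupp.mapRange.linearMap f

/-- The constant-polynomial embedding `M → M[λ]`. -/
def cst : M →ₗ[k] (ℕ →₀ M) := Finsupp.lsingle 0

/-- Multiplication by `λ` on `M[λ,μ] := ℕ →₀ (ℕ →₀ M)` (outer variable `μ`, inner `λ`). -/
def lamMul2 : (ℕ →₀ (ℕ →₀ M)) →ₗ[k] (ℕ →₀ (ℕ →₀ M)) := cw k (lamMul k)

/-- Multiplication by `μ` on `M[λ,μ]`. -/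
def muMul2 : (ℕ →₀ (ℕ →₀ M)) →ₗ[k] (ℕ →₀ (ℕ →₀ M)) := Finsupp.lmapDomain (ℕ →₀ M) k Nat.succ

/-- The constant embedding `M → M[λ,μ]`. -/
def cst2 : M →ₗ[k] (ℕ →₀ (ℕ →₀ M)) := (cst k).comp (cst k)

/-- Interchange of the two variables of `M[λ,μ]`. -/
def swapVar : (ℕ →₀ (ℕ →₀ M)) →ₗ[k] (ℕ →₀ (ℕ →₀ M)) :=
  Finsupp.lsum k fun n => cw k (Finsupp.lsingle n)

/-- The substitution `λ ↦ -∂-λ` on `M[λ]`, where `∂` acts on `M` via `D`. -/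
def substNeg (D : M →ₗ[k] M) : (ℕ →₀ M) →ₗ[k] (ℕ →₀ M) :=
  Finsupp.lsum k fun n => ((-(cw k D) - lamMul k) ^ n) ∘ₗ cst k

/-- The substitution `ν ↦ λ+μ` from `M[ν]` to `M[λ,μ]`. -/
def substAdd : (ℕ →₀ M) →ₗ[k] (ℕ →₀ (ℕ →₀ M)) :=
  Finsupp.lsum k fun n => ((lamMul2 k + muMul2 k) ^ n) ∘ₗ cst2 k

end Base
section Ops

variable {A B C V W L P : Type} [AddCommGroup A] [Module k A] [AddCommGroup B] [Module k B]
  [AddCommGroup C] [Module k C] [AddCommGroup V] [Module k V] [AddCommGroup W] [Module k W]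
  [AddCommGroup L] [Module k L] [AddCommGroup P] [Module k P]

/-- `P_λ(a, Q_μ(b, c))`, an element of `W[λ,μ]` (outer variable `μ`, inner `λ`). -/
def opComp (F : A →ₗ[k] C →ₗ[k] (ℕ →₀ W)) (G : B →ₗ[k] V →ₗ[k] (ℕ →₀ C))
    (a : A) (b : B) (c : V) : ℕ →₀ (ℕ →₀ W) := cw k (F a) (G b c)

/-- `Q_μ(b, P_λ(a, c))`, an element of `W[λ,μ]` (outer variable `μ`, inner `λ`). -/
def opCompSwap (F : B →ₗ[k] C →ₗ[k] (ℕ →₀ W)) (G : A →ₗ[k] V →ₗ[k] (ℕ →₀ C))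
    (b : B) (a : A) (c : V) : ℕ →₀ (ℕ →₀ W) := swapVar k (cw k (F b) (G a c))

/-- `Q_{λ+μ}(P_λ(a, b), c)`, an element of `W[λ,μ]` (outer variable `μ`, inner `λ`). -/
def opSubst (F : A →ₗ[k] B →ₗ[k] (ℕ →₀ C)) (G : C →ₗ[k] V →ₗ[k] (ℕ →₀ W))
    (a : A) (b : B) (c : V) : ℕ →₀ (ℕ →₀ W) :=
  Finsupp.lsum k (fun n => ((lamMul2 k (M := W)) ^ n) ∘ₗ substAdd k) (cw k (G.flip c) (F a b))

end Ops

/-- The Koszul sign `(-1)^{|a||b|}` attached to parities `i`, `j`. -/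
def sgn (i j : ZMod 2) : ℤ := if i = 1 ∧ j = 1 then -1 else 1

section Structures

variable {A B C L V P : Type} [AddCommGroup A] [Module k A] [AddCommGroup B] [Module k B]
  [AddCommGroup C] [Module k C]
  [AddCommGroup L] [Module k L] [AddCommGroup V] [Module k V] [AddCommGroup P] [Module k P]

/-- A `ℤ₂`-graded module over `H = k[∂]`, where `∂` acts via `D`:
the two graded components are complementary and `∂`-invariant. -/
structure IsGradedHMod (D : L →ₗ[k] L) (par : ZMod 2 → Submodule k L) : Prop where
  sup_eq_top : par 0 ⊔ par 1 = ⊤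
  inf_eq_bot : par 0 ⊓ par 1 = ⊥
  map_d : ∀ i a, a ∈ par i → D a ∈ par i

/-- Sesqui-linearity of a pairing `A ⊗ B → C[λ]` with respect to the `∂`-actions
`DA`, `DB`, `DC`: `F(∂a, b) = -λ F(a,b)` and `F(a, ∂b) = (∂+λ) F(a,b)`. -/
structure IsSesqui (DA : A →ₗ[k] A) (DB : B →ₗ[k] B) (DC : C →ₗ[k] C)
    (F : A →ₗ[k] B →ₗ[k] (ℕ →₀ C)) : Prop where
  dleft : ∀ a b, F (DA a) b = -(lamMul k (F a b))
  dright : ∀ a b, F a (DB b) = cw k DC (F a b) + lamMul k (F a b)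

/-- A Lie conformal superalgebra structure on the `H`-module `L` (with `∂` acting via `D`)
with `ℤ₂`-grading `par` and `λ`-bracket `Br`. -/
structure IsLieConfSuper (D : L →ₗ[k] L) (par : ZMod 2 → Submodule k L)
    (Br : L →ₗ[k] L →ₗ[k] (ℕ →₀ L)) : Prop where
  graded : IsGradedHMod k D par
  sesqui : IsSesqui k D D D Br
  parity : ∀ i j a b, a ∈ par i → b ∈ par j → ∀ n, Br a b n ∈ par (i + j)
  skew : ∀ i j a b, a ∈ par i → b ∈ par j → Br a b = -(sgn i j • substNeg k D (Br b a))
  jacobi : ∀ i j a b c, a ∈ par i → b ∈ par j →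
    opComp k Br Br a b c = opSubst k Br Br a b c + sgn i j • opCompSwap k Br Br b a c

/-- A Poisson conformal superalgebra structure on the `H`-module `P`, with `λ`-bracket `Br`
and conformally associative, supercommutative product `Ml`, linked by the conformal
Leibniz rule. -/
structure IsPoissonConfSuper (D : P →ₗ[k] P) (par : ZMod 2 → Submodule k P)
    (Br Ml : P →ₗ[k] P →ₗ[k] (ℕ →₀ P)) : Prop where
  lie : IsLieConfSuper k D par Br
  mul_sesqui : IsSesqui k D D D Ml
  mul_parity : ∀ i j a b, a ∈ par i → b ∈ par j → ∀ n, Ml a b n ∈ par (i + j)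
  assoc : ∀ a b c, opComp k Ml Ml a b c = opSubst k Ml Ml a b c
  comm : ∀ i j a b, a ∈ par i → b ∈ par j → Ml a b = sgn i j • substNeg k D (Ml b a)
  leibniz : ∀ i j a b c, a ∈ par i → b ∈ par j →
    opComp k Br Ml a b c = opSubst k Br Ml a b c + sgn i j • opCompSwap k Ml Br b a c

/-- A conformal representation of the Lie conformal superalgebra `(L, D, par, Br)` on the
`ℤ₂`-graded `H`-module `(V, DV, parV)`. -/
structure IsConfRep (D : L →ₗ[k] L) (par : ZMod 2 → Submodule k L)
    (Br : L →ₗ[k] L →ₗ[k] (ℕ →₀ L)) (DV : V →ₗ[k] V) (parV : ZMod 2 → Submodule k V)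
    (ρ : L →ₗ[k] V →ₗ[k] (ℕ →₀ V)) : Prop where
  sesqui : IsSesqui k D DV DV ρ
  parity : ∀ i j a x, a ∈ par i → x ∈ parV j → ∀ n, ρ a x n ∈ parV (i + j)
  jacobi : ∀ i j a b x, a ∈ par i → b ∈ par j →
    opComp k ρ ρ a b x - sgn i j • opCompSwap k ρ ρ b a x = opSubst k Br ρ a b x

/-- Finiteness of an `H`-module: it is generated, as a `k[∂]`-module, by finitely
many elements. -/
def IsHFinite (DV : V →ₗ[k] V) : Prop :=
  ∃ s : Finset V, ∀ W : Submodule k V, (∀ x ∈ W, DV x ∈ W) → (↑s : Set V) ⊆ ↑W → W = ⊤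

/-- The Lie conformal superalgebra `(L, D, par, Br)` admits a finite faithful conformal
representation. -/
def HasFFR (D : L →ₗ[k] L) (par : ZMod 2 → Submodule k L)
    (Br : L →ₗ[k] L →ₗ[k] (ℕ →₀ L)) : Prop :=
  ∃ (V : Type) (_ : AddCommGroup V) (_ : Module k V) (DV : V →ₗ[k] V)
    (parV : ZMod 2 → Submodule k V) (ρ : L →ₗ[k] V →ₗ[k] (ℕ →₀ V)),
    IsGradedHMod k DV parV ∧ IsConfRep k D par Br DV parV ρ ∧ IsHFinite k DV ∧
      ∀ a : L, a ≠ 0 → ρ a ≠ 0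

/-- `ρ` (defined on the ambient space `P`) restricts to a conformal representation of the
Lie conformal subalgebra `L ≤ P` (with ambient `λ`-bracket `Br`) on `(V, DV, parV)`. -/
def IsConfRepOn (D : P →ₗ[k] P) (par : ZMod 2 → Submodule k P)
    (Br : P →ₗ[k] P →ₗ[k] (ℕ →₀ P)) (L : Submodule k P)
    (DV : V →ₗ[k] V) (parV : ZMod 2 → Submodule k V)
    (ρ : P →ₗ[k] V →ₗ[k] (ℕ →₀ V)) : Prop :=
  (∀ a ∈ L, ∀ x, ρ (D a) x = -(lamMul k (ρ a x))) ∧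
  (∀ a ∈ L, ∀ x, ρ a (DV x) = cw k DV (ρ a x) + lamMul k (ρ a x)) ∧
  (∀ i j, ∀ a ∈ L ⊓ par i, ∀ x ∈ parV j, ∀ n, ρ a x n ∈ parV (i + j)) ∧
  (∀ i j, ∀ a ∈ L ⊓ par i, ∀ b ∈ L ⊓ par j, ∀ x,
    opComp k ρ ρ a b x - sgn i j • opCompSwap k ρ ρ b a x = opSubst k Br ρ a b x)

end Structures
section Extension

variable {A B W V : Type} [AddCommGroup A] [Module k A] [AddCommGroup B] [Module k B]
  [AddCommGroup W] [Module k W] [AddCommGroup V] [Module k V]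

/-- The sesqui-linear extension of a pairing `F : A ⊗ B → W[λ]` to a pairing
`(H ⊗ A) ⊗ (H ⊗ B) → W[λ]` (where `H ⊗ A` is realized as `ℕ →₀ A`, the index recording
the power of `∂`): `F(∂^n a, ∂^m b) = (-λ)^n (∂+λ)^m F(a, b)`, where `∂` acts on `W[λ]`
coefficientwise via `DW`. -/
def extSesqui (DW : W →ₗ[k] W) (F : A →ₗ[k] B →ₗ[k] (ℕ →₀ W)) :
    (ℕ →₀ A) →ₗ[k] (ℕ →₀ B) →ₗ[k] (ℕ →₀ W) :=
  Finsupp.lsum k fun n =>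
    (Finsupp.lsum (R := k) k).toLinearMap.comp <| LinearMap.pi fun m =>
      (LinearMap.llcomp k B (ℕ →₀ W) (ℕ →₀ W)
        (((-(lamMul k (M := W))) ^ n) * ((cw k DW + lamMul k) ^ m))).comp F

/-- The action of `∂` on `H ⊗ V`, realized as `ℕ →₀ V`. -/
def DD (V : Type) [AddCommGroup V] [Module k V] : (ℕ →₀ V) →ₗ[k] (ℕ →₀ V) :=
  Finsupp.lmapDomain V k Nat.succ

/-- The canonical embedding `V → H ⊗ V`. -/
def emb (V : Type) [AddCommGroup V] [Module k V] : V →ₗ[k] (ℕ →₀ V) :=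
  Finsupp.lsingle 0

/-- A grading of `V` lifts coefficientwise to a grading of `H ⊗ V = ℕ →₀ V`. -/
def liftPar {V : Type} [AddCommGroup V] [Module k V] (par : ZMod 2 → Submodule k V)
    (i : ZMod 2) : Submodule k (ℕ →₀ V) where
  carrier := { f | ∀ n, f n ∈ par i }
  add_mem' := fun hf hg n => by
    simpa only [Finsupp.add_apply] using add_mem (hf n) (hg n)
  zero_mem' := fun n => by simp
  smul_mem' := fun c f hf n => by
    simpa only [Finsupp.smul_apply] using Submodule.smul_mem _ c (hf n)

end Extension

section Super

variable (p : Type) [NonUnitalRing p] [Module k p] [SMulCommClass k p p] [IsScalarTower k p p]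

/-- An (ordinary) Poisson superalgebra structure on the `ℤ₂`-graded associative
supercommutative algebra `p`, with super Lie bracket `br`. -/
structure IsPoissonSuper (par : ZMod 2 → Submodule k p) (br : p →ₗ[k] p →ₗ[k] p) : Prop where
  sup_eq_top : par 0 ⊔ par 1 = ⊤
  inf_eq_bot : par 0 ⊓ par 1 = ⊥
  mul_mem : ∀ i j (a b : p), a ∈ par i → b ∈ par j → a * b ∈ par (i + j)
  mul_scomm : ∀ i j (a b : p), a ∈ par i → b ∈ par j → a * b = sgn i j • (b * a)
  br_mem : ∀ i j a b, a ∈ par i → b ∈ par j → br a b ∈ par (i + j)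
  br_skew : ∀ i j a b, a ∈ par i → b ∈ par j → br a b = -(sgn i j • br b a)
  br_jacobi : ∀ i j a b c, a ∈ par i → b ∈ par j →
    br a (br b c) = br (br a b) c + sgn i j • br b (br a c)
  leibniz : ∀ i j a b c, a ∈ par i → b ∈ par j →
    br a (b * c) = br a b * c + sgn i j • (b * br a c)

/-- An even derivation of the Poisson superalgebra `(p, par, br)`. -/
structure IsEvenDerivation (par : ZMod 2 → Submodule k p) (br : p →ₗ[k] p →ₗ[k] p)
    (d : p →ₗ[k] p) : Prop where
  even : ∀ i a, a ∈ par i → d a ∈ par i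
  map_mul : ∀ a b, d (a * b) = d a * b + a * d b
  map_br : ∀ a b, d (br a b) = br (d a) b + br a (d b)

/-- Base pairing `a ⊗ b ↦ a b` (constant in `λ`) for the current/quadratic constructions. -/
def curMul0 : p →ₗ[k] p →ₗ[k] (ℕ →₀ (ℕ →₀ p)) :=
  (LinearMap.mul k p).compr₂ ((cst k).comp (emb k p))

/-- Base pairing `a ⊗ b ↦ {a, b}` (constant in `λ`) for the current construction. -/
def curBr0 (br : p →ₗ[k] p →ₗ[k] p) : p →ₗ[k] p →ₗ[k] (ℕ →₀ (ℕ →₀ p)) :=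
  br.compr₂ ((cst k).comp (emb k p))

/-- Base pairing `a ⊗ b ↦ {a, b} + ∂ (d a · b) + λ d(a b)` of the Poisson conformal
superalgebra `L(p, d)`. -/
def qua0 (br : p →ₗ[k] p →ₗ[k] p) (d : p →ₗ[k] p) : p →ₗ[k] p →ₗ[k] (ℕ →₀ (ℕ →₀ p)) :=
  br.compr₂ ((cst k).comp (emb k p))
    + ((LinearMap.mul k p).comp d).compr₂ ((cst k).comp ((DD k p).comp (emb k p)))
    + ((LinearMap.mul k p).compr₂ d).compr₂ ((lamMul k).comp ((cst k).comp (emb k p)))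

/-- The multiplication `(a ∂^n)_λ (b ∂^m) = (-λ)^n (∂+λ)^m (a b)` on `H ⊗ p`. -/
def LpdMul : (ℕ →₀ p) →ₗ[k] (ℕ →₀ p) →ₗ[k] (ℕ →₀ (ℕ →₀ p)) :=
  extSesqui k (DD k p) (curMul0 k p)

/-- The `λ`-bracket of the current Poisson conformal superalgebra `Cur p`. -/
def CurBr (br : p →ₗ[k] p →ₗ[k] p) : (ℕ →₀ p) →ₗ[k] (ℕ →₀ p) →ₗ[k] (ℕ →₀ (ℕ →₀ p)) :=
  extSesqui k (DD k p) (curBr0 k p br)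

/-- The `λ`-bracket of the Poisson conformal superalgebra `L(p, d)`. -/
def LpdBr (br : p →ₗ[k] p →ₗ[k] p) (d : p →ₗ[k] p) :
    (ℕ →₀ p) →ₗ[k] (ℕ →₀ p) →ₗ[k] (ℕ →₀ (ℕ →₀ p)) :=
  extSesqui k (DD k p) (qua0 k p br d)

/-- The twisted action `ρ̂_λ(a, u) = [a_λ u] + λ (a_λ u)` on `L(p, d)`. -/
def LpdRho (br : p →ₗ[k] p →ₗ[k] p) (d : p →ₗ[k] p) :
    (ℕ →₀ p) →ₗ[k] (ℕ →₀ p) →ₗ[k] (ℕ →₀ (ℕ →₀ p)) :=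
  LpdBr k p br d + (LpdMul k p).compr₂ (lamMul k)

end Super

end

/-!
Write `ρ̂ = [·_λ·] + λ (·_λ·)`. Expanding
`ρ̂_λ(a, ρ̂_μ(b, x)) - (-1)^{|a||b|} ρ̂_μ(b, ρ̂_λ(a, x))` produces four pairs of terms: the
bracket–bracket pair is the Jacobi identity, the pair with coefficient `μ` is the Leibniz rule,
the pair with coefficient `λ` is the Leibniz rule for `(b, a)` read backwards, and the
product–product pair cancels by associativity and commutativity. The last two steps need
`([b_μ a]_{λ+μ} x)` and `((b_μ a)_{λ+μ} x)` in terms of `(a, b)`: skew-symmetry and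
commutativity introduce the substitution `λ ↦ -∂-λ`, which the sesqui-linearity of the outer
product turns into the exchange `λ ↔ μ`.
-/

section TwistedRepresentation

variable {k : Type} [Field k]

section PolynomialOperators

variable {M N : Type} [AddCommGroup M] [Module k M] [AddCommGroup N] [Module k N]

@[simp]
lemma lamMul_single (n : ℕ) (m : M) : lamMul k (single n m) = single (n + 1) m := by
  simp [lamMul]

@[simp]
lemma cw_single (f : M →ₗ[k] N) (n : ℕ) (m : M) : cw k f (single n m) = single n (f m) := by
  simp [cw]

@[simp]
lemma muMul2_single (n : ℕ) (f : ℕ →₀ M) : muMul2 k (single n f) = single (n + 1) f := by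
  simp [muMul2]

@[simp]
lemma lamMul2_single (n : ℕ) (f : ℕ →₀ M) :
    lamMul2 k (single n f) = single n (lamMul k f) := by
  simp [lamMul2]

@[simp]
lemma swapVar_single (n m : ℕ) (x : M) :
    swapVar k (single n (single m x)) = single m (single n x) := by
  simp [swapVar]

lemma lamMul_apply_mem {S : Submodule k M} {f : ℕ →₀ M} (hf : ∀ n, f n ∈ S) (n : ℕ) :
    lamMul k f n ∈ S := by
  cases n with
  | zero => simp [lamMul, Finsupp.mapDomain_of_notMem_range, S.zero_mem]
  | succ n => simpa [lamMul, Finsupp.mapDomain_apply Nat.succ_injective] using hf n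

lemma cw_add (f g : M →ₗ[k] N) : cw k (f + g) = cw k f + cw k g := by
  ext; simp

lemma cw_comp {Q : Type} [AddCommGroup Q] [Module k Q] (g : N →ₗ[k] Q) (f : M →ₗ[k] N) :
    cw k (g ∘ₗ f) = cw k g ∘ₗ cw k f :=
  Finsupp.mapRange.linearMap_comp g f

lemma cw_comp_lamMul (f : M →ₗ[k] N) : cw k f ∘ₗ lamMul k = lamMul k ∘ₗ cw k f := by
  ext; simp

lemma cw_lamMul (f : M →ₗ[k] N) (y : ℕ →₀ M) : cw k f (lamMul k y) = lamMul k (cw k f y) :=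
  LinearMap.congr_fun (cw_comp_lamMul f) y

lemma cw_lamMul_eq_lamMul2 : cw k (lamMul k) = lamMul2 k (M := M) :=
  rfl

lemma lamMul_eq_muMul2 : lamMul k = muMul2 k (M := M) :=
  rfl

lemma lamMul2_comp_muMul2 : lamMul2 k ∘ₗ muMul2 k = muMul2 k ∘ₗ lamMul2 k (M := M) := by
  ext; simp

lemma lamMul2_muMul2 (f : ℕ →₀ ℕ →₀ M) : lamMul2 k (muMul2 k f) = muMul2 k (lamMul2 k f) := by
  rw [← LinearMap.comp_apply, lamMul2_comp_muMul2, LinearMap.comp_apply]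

lemma swapVar_comp_swapVar : swapVar k ∘ₗ swapVar k = LinearMap.id (M := ℕ →₀ ℕ →₀ M) := by
  ext; simp

lemma swapVar_comp_lamMul2 : swapVar k ∘ₗ lamMul2 k = muMul2 k ∘ₗ swapVar k (M := M) := by
  ext; simp

lemma swapVar_comp_muMul2 : swapVar k ∘ₗ muMul2 k = lamMul2 k ∘ₗ swapVar k (M := M) := by
  ext; simp

lemma swapVar_swapVar (f : ℕ →₀ ℕ →₀ M) : swapVar k (swapVar k f) = f :=
  LinearMap.congr_fun swapVar_comp_swapVar f

lemma swapVar_lamMul2 (f : ℕ →₀ ℕ →₀ M) : swapVar k (lamMul2 k f) = muMul2 k (swapVar k f) :=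
  LinearMap.congr_fun swapVar_comp_lamMul2 f

lemma swapVar_muMul2 (f : ℕ →₀ ℕ →₀ M) : swapVar k (muMul2 k f) = lamMul2 k (swapVar k f) :=
  LinearMap.congr_fun swapVar_comp_muMul2 f

end PolynomialOperators

section Substitution

variable {M N : Type} [AddCommGroup M] [Module k M] [AddCommGroup N] [Module k N]

lemma substAdd_single (n : ℕ) (m : M) :
    substAdd k (single n m) = ((lamMul2 k + muMul2 k : Module.End k _) ^ n) (cst2 k m) := by
  simp [substAdd]

lemma substNeg_single (D : M →ₗ[k] M) (n : ℕ) (m : M) :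
    substNeg k D (single n m) = ((-(cw k D) - lamMul k : Module.End k _) ^ n) (cst k m) := by
  simp [substNeg]

lemma substAdd_comp_lamMul :
    substAdd k ∘ₗ lamMul k = (lamMul2 k + muMul2 k) ∘ₗ substAdd k (M := M) := by
  ext n m : 2
  simp only [LinearMap.comp_apply, Finsupp.lsingle_apply, lamMul_single, substAdd_single,
    pow_succ', Module.End.mul_apply]

lemma swapVar_comp_substAdd : swapVar k ∘ₗ substAdd k = substAdd k (M := M) := by
  have h : swapVar k ∘ₗ (lamMul2 k + muMul2 k)
      = (lamMul2 k + muMul2 k) ∘ₗ swapVar k (M := M) := by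
    rw [LinearMap.comp_add, swapVar_comp_lamMul2, swapVar_comp_muMul2, LinearMap.add_comp,
      add_comm]
  ext n m : 2
  simp only [LinearMap.comp_apply, Finsupp.lsingle_apply, substAdd_single]
  rw [← LinearMap.comp_apply (swapVar k), ← Module.End.commute_pow_left_of_commute h.symm]
  simp [cst2, cst]

end Substitution

section SubstLamAdd

variable {M N : Type} [AddCommGroup M] [Module k M] [AddCommGroup N] [Module k N]

variable (k) in
/-- `f(κ, ν) ↦ f(λ, λ + μ)`, from `M[ν][κ]` to `M[λ][μ]` (outer variables `κ` and `μ`). -/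
noncomputable def substLamAdd : (ℕ →₀ ℕ →₀ M) →ₗ[k] (ℕ →₀ ℕ →₀ M) :=
  Finsupp.lsum k fun n => (lamMul2 k ^ n) ∘ₗ substAdd k

lemma opSubst_eq_substLamAdd {A B C V W : Type} [AddCommGroup A] [Module k A]
    [AddCommGroup B] [Module k B] [AddCommGroup C] [Module k C] [AddCommGroup V] [Module k V]
    [AddCommGroup W] [Module k W] (F : A →ₗ[k] B →ₗ[k] (ℕ →₀ C))
    (G : C →ₗ[k] V →ₗ[k] (ℕ →₀ W)) (a : A) (b : B) (c : V) :
    opSubst k F G a b c = substLamAdd k (cw k (G.flip c) (F a b)) :=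
  rfl

lemma substLamAdd_single (n : ℕ) (f : ℕ →₀ M) :
    substLamAdd k (single n f) = (lamMul2 k ^ n) (substAdd k f) := by
  simp [substLamAdd]

lemma substLamAdd_comp_muMul2 :
    substLamAdd k ∘ₗ muMul2 k = lamMul2 k ∘ₗ substLamAdd k (M := M) := by
  refine Finsupp.lhom_ext fun n f => ?_
  simp [substLamAdd_single, pow_succ']

lemma substLamAdd_comp_lamMul2 :
    substLamAdd k ∘ₗ lamMul2 k = (lamMul2 k + muMul2 k) ∘ₗ substLamAdd k (M := M) := by
  have h : Commute (lamMul2 k : Module.End k (ℕ →₀ ℕ →₀ M)) (lamMul2 k + muMul2 k) :=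
    (Commute.refl _).add_right lamMul2_comp_muMul2
  refine Finsupp.lhom_ext fun n f => ?_
  simp only [LinearMap.comp_apply, lamMul2_single, substLamAdd_single]
  rw [← LinearMap.comp_apply (substAdd k), substAdd_comp_lamMul, LinearMap.comp_apply,
    ← Module.End.mul_apply, (h.pow_left n).eq, Module.End.mul_apply]

lemma substLamAdd_lamMul2 (f : ℕ →₀ ℕ →₀ M) :
    substLamAdd k (lamMul2 k f) = lamMul2 k (substLamAdd k f) + muMul2 k (substLamAdd k f) :=
  LinearMap.congr_fun substLamAdd_comp_lamMul2 f

/-- If `g(∂y) = -λ g(y)`, then substituting `λ ↦ -∂-λ` before evaluating at `(λ, λ+μ)`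
amounts to the exchange `λ ↔ μ`. -/
lemma swapVar_substLamAdd_cw_substNeg (D : N →ₗ[k] N) (g : N →ₗ[k] (ℕ →₀ M))
    (hg : ∀ y, g (D y) = -(lamMul k (g y))) (w : ℕ →₀ N) :
    swapVar k (substLamAdd k (cw k g (substNeg k D w))) = substLamAdd k (cw k g w) := by
  have hD : cw k g ∘ₗ cw k D = -(lamMul2 k ∘ₗ cw k g) := by
    ext n y : 2
    simp [hg]
  have hstep : (substLamAdd k ∘ₗ cw k g) ∘ₗ (-(cw k D) - lamMul k)
      = muMul2 k ∘ₗ (substLamAdd k ∘ₗ cw k g) := by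
    rw [LinearMap.comp_sub, LinearMap.comp_neg, LinearMap.comp_assoc, hD, LinearMap.comp_assoc,
      cw_comp_lamMul, LinearMap.comp_neg, lamMul_eq_muMul2]
    simp only [← LinearMap.comp_assoc, substLamAdd_comp_lamMul2, substLamAdd_comp_muMul2,
      LinearMap.add_comp]
    abel
  suffices swapVar k ∘ₗ substLamAdd k ∘ₗ cw k g ∘ₗ substNeg k D = substLamAdd k ∘ₗ cw k g from
    LinearMap.congr_fun this w
  ext n y : 2
  have hpow := Module.End.commute_pow_left_of_commute hstep.symm n
  have hswap :=
    Module.End.commute_pow_left_of_commute (swapVar_comp_muMul2 (k := k) (M := M)).symm n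
  have h1 := LinearMap.congr_fun hpow (cst k y)
  have h2 := LinearMap.congr_fun hswap (substAdd k (g y))
  simp only [LinearMap.comp_apply] at h1 h2
  simp only [LinearMap.comp_apply, Finsupp.lsingle_apply]
  rw [substNeg_single, ← h1, cst, Finsupp.lsingle_apply, cw_single, substLamAdd_single, pow_zero,
    Module.End.one_apply, ← h2, ← LinearMap.comp_apply (swapVar k), swapVar_comp_substAdd,
    cw_single, substLamAdd_single]

lemma swapVar_opSubst_of_eq_smul_substNeg {A C V W : Type} [AddCommGroup A] [Module k A]
    [AddCommGroup C] [Module k C] [AddCommGroup V] [Module k V]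
    [AddCommGroup W] [Module k W] {D : C →ₗ[k] C} {F : A →ₗ[k] A →ₗ[k] (ℕ →₀ C)}
    {G : C →ₗ[k] V →ₗ[k] (ℕ →₀ W)} (hG : ∀ y c, G (D y) c = -(lamMul k (G y c)))
    {a b : A} {ε : ℤ} (hF : F b a = ε • substNeg k D (F a b)) (c : V) :
    swapVar k (opSubst k F G b a c) = ε • opSubst k F G a b c := by
  rw [opSubst_eq_substLamAdd, hF, map_zsmul, map_zsmul, map_zsmul,
    swapVar_substLamAdd_cw_substNeg D (G.flip c) (fun y => hG y c), opSubst_eq_substLamAdd]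

end SubstLamAdd

section TwistedAction

variable {A B C V W : Type} [AddCommGroup A] [Module k A] [AddCommGroup B] [Module k B]
  [AddCommGroup C] [Module k C] [AddCommGroup V] [Module k V] [AddCommGroup W] [Module k W]

variable (k) in
noncomputable def twistedAction (F G : A →ₗ[k] B →ₗ[k] (ℕ →₀ C)) :
    A →ₗ[k] B →ₗ[k] (ℕ →₀ C) :=
  F + G.compr₂ (lamMul k)

lemma twistedAction_apply (F G : A →ₗ[k] B →ₗ[k] (ℕ →₀ C)) (a : A) (b : B) :
    twistedAction k F G a b = F a b + lamMul k (G a b) :=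
  rfl

lemma opCompSwap_eq_swapVar_opComp (F : B →ₗ[k] C →ₗ[k] (ℕ →₀ W))
    (G : A →ₗ[k] V →ₗ[k] (ℕ →₀ C)) (b : B) (a : A) (c : V) :
    opCompSwap k F G b a c = swapVar k (opComp k F G b a c) :=
  rfl

lemma opComp_twistedAction (F F' : A →ₗ[k] C →ₗ[k] (ℕ →₀ W))
    (G G' : B →ₗ[k] V →ₗ[k] (ℕ →₀ C)) (a : A) (b : B) (c : V) :
    opComp k (twistedAction k F F') (twistedAction k G G') a b c
      = opComp k F G a b c + lamMul2 k (opComp k F' G a b c) + muMul2 k (opComp k F G' a b c)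
        + muMul2 k (lamMul2 k (opComp k F' G' a b c)) := by
  have hF : twistedAction k F F' a = F a + lamMul k ∘ₗ F' a := rfl
  simp only [opComp, twistedAction_apply, hF, cw_add, cw_comp, map_add, LinearMap.add_apply,
    LinearMap.comp_apply, cw_lamMul, cw_lamMul_eq_lamMul2, lamMul_eq_muMul2, lamMul2_muMul2,
    add_assoc]

lemma opCompSwap_twistedAction (F F' : B →ₗ[k] C →ₗ[k] (ℕ →₀ W))
    (G G' : A →ₗ[k] V →ₗ[k] (ℕ →₀ C)) (b : B) (a : A) (c : V) :
    opCompSwap k (twistedAction k F F') (twistedAction k G G') b a c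
      = opCompSwap k F G b a c + muMul2 k (opCompSwap k F' G b a c)
        + lamMul2 k (opCompSwap k F G' b a c)
        + lamMul2 k (muMul2 k (opCompSwap k F' G' b a c)) := by
  simp only [opCompSwap_eq_swapVar_opComp, opComp_twistedAction, map_add, swapVar_lamMul2,
    swapVar_muMul2]

lemma opSubst_twistedAction (F : A →ₗ[k] B →ₗ[k] (ℕ →₀ C))
    (G G' : C →ₗ[k] V →ₗ[k] (ℕ →₀ W)) (a : A) (b : B) (c : V) :
    opSubst k F (twistedAction k G G') a b c
      = opSubst k F G a b c + lamMul2 k (opSubst k F G' a b c)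
        + muMul2 k (opSubst k F G' a b c) := by
  have hflip : (twistedAction k G G').flip c = G.flip c + lamMul k ∘ₗ G'.flip c := rfl
  rw [opSubst_eq_substLamAdd, hflip, cw_add, cw_comp, LinearMap.add_apply, map_add,
    LinearMap.comp_apply, cw_lamMul_eq_lamMul2, substLamAdd_lamMul2, ← opSubst_eq_substLamAdd,
    ← opSubst_eq_substLamAdd, add_assoc]

lemma IsSesqui.twistedAction {DA : A →ₗ[k] A} {DB : B →ₗ[k] B} {DC : C →ₗ[k] C}
    {F G : A →ₗ[k] B →ₗ[k] (ℕ →₀ C)} (hF : IsSesqui k DA DB DC F)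
    (hG : IsSesqui k DA DB DC G) :
    IsSesqui k DA DB DC (twistedAction k F G) where
  dleft a b := by
    simp only [twistedAction_apply, hF.dleft, hG.dleft, map_neg, map_add, neg_add]
  dright a b := by
    simp only [twistedAction_apply, hF.dright, hG.dright, map_add, cw_lamMul]
    abel

end TwistedAction

lemma sgn_comm (i j : ZMod 2) : sgn i j = sgn j i := by
  simp only [sgn, and_comm]

lemma sgn_smul_sgn_smul {M : Type} [AddCommGroup M] (i j : ZMod 2) (x : M) :
    sgn i j • sgn i j • x = x := by
  unfold sgn
  split_ifs <;> simp

namespace IsPoissonConfSuper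

variable {P : Type} [AddCommGroup P] [Module k P] {D : P →ₗ[k] P}
  {par : ZMod 2 → Submodule k P} {Br Ml : P →ₗ[k] P →ₗ[k] (ℕ →₀ P)}

lemma swapVar_opSubst_br_mul (hP : IsPoissonConfSuper k D par Br Ml) {i j : ZMod 2} {a b : P}
    (ha : a ∈ par i) (hb : b ∈ par j) (x : P) :
    swapVar k (opSubst k Br Ml b a x) = -(sgn i j • opSubst k Br Ml a b x) := by
  rw [← neg_smul]
  refine swapVar_opSubst_of_eq_smul_substNeg hP.mul_sesqui.dleft ?_ x
  rw [hP.lie.skew j i b a hb ha, sgn_comm, neg_smul]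

lemma opComp_mul_br (hP : IsPoissonConfSuper k D par Br Ml) {i j : ZMod 2} {a b : P}
    (ha : a ∈ par i) (hb : b ∈ par j) (x : P) :
    opComp k Ml Br a b x = opSubst k Br Ml a b x + sgn i j • opCompSwap k Br Ml b a x := by
  have h := congrArg (swapVar k) (hP.leibniz j i b a x hb ha)
  rw [← opCompSwap_eq_swapVar_opComp, map_add, map_zsmul, hP.swapVar_opSubst_br_mul ha hb,
    sgn_comm j i, opCompSwap_eq_swapVar_opComp Ml Br a b x, swapVar_swapVar] at h
  rw [h, smul_add, smul_neg, sgn_smul_sgn_smul, sgn_smul_sgn_smul]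
  abel

lemma sgn_smul_opCompSwap_mul_mul (hP : IsPoissonConfSuper k D par Br Ml) {i j : ZMod 2}
    {a b : P} (ha : a ∈ par i) (hb : b ∈ par j) (x : P) :
    sgn i j • opCompSwap k Ml Ml b a x = opComp k Ml Ml a b x := by
  have hcomm : Ml b a = sgn i j • substNeg k D (Ml a b) := by
    rw [hP.comm j i b a hb ha, sgn_comm]
  rw [opCompSwap_eq_swapVar_opComp, hP.assoc, swapVar_opSubst_of_eq_smul_substNeg
    hP.mul_sesqui.dleft hcomm, sgn_smul_sgn_smul, hP.assoc]

lemma jacobi_twistedAction (hP : IsPoissonConfSuper k D par Br Ml) {i j : ZMod 2} {a b : P}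
    (ha : a ∈ par i) (hb : b ∈ par j) (x : P) :
    opComp k (twistedAction k Br Ml) (twistedAction k Br Ml) a b x
        - sgn i j • opCompSwap k (twistedAction k Br Ml) (twistedAction k Br Ml) b a x
      = opSubst k Br (twistedAction k Br Ml) a b x := by
  rw [opComp_twistedAction, opCompSwap_twistedAction, opSubst_twistedAction,
    hP.lie.jacobi i j a b x ha hb, hP.opComp_mul_br ha hb, hP.leibniz i j a b x ha hb,
    ← hP.sgn_smul_opCompSwap_mul_mul ha hb, lamMul2_muMul2]
  simp only [map_add, map_zsmul, smul_add]
  abel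

theorem isConfRep_twistedAction (hP : IsPoissonConfSuper k D par Br Ml) :
    IsConfRep k D par Br D par (twistedAction k Br Ml) where
  sesqui := hP.lie.sesqui.twistedAction hP.mul_sesqui
  parity i j a x ha hx n :=
    add_mem (hP.lie.parity i j a x ha hx n) (lamMul_apply_mem (hP.mul_parity i j a x ha hx) n)
  jacobi _ _ _ _ x ha hb := hP.jacobi_twistedAction ha hb x

end IsPoissonConfSuper


theorem IsConfRep.isConfRepOn {P V : Type} [AddCommGroup P] [Module k P] [AddCommGroup V]
    [Module k V] {D : P →ₗ[k] P} {par : ZMod 2 → Submodule k P}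
    {Br : P →ₗ[k] P →ₗ[k] (ℕ →₀ P)} {DV : V →ₗ[k] V} {parV : ZMod 2 → Submodule k V}
    {ρ : P →ₗ[k] V →ₗ[k] (ℕ →₀ V)} (hρ : IsConfRep k D par Br DV parV ρ) (L : Submodule k P) :
    IsConfRepOn k D par Br L DV parV ρ :=
  ⟨fun a _ => hρ.sesqui.dleft a, fun a _ => hρ.sesqui.dright a,
    fun i j a ha x => hρ.parity i j a x ha.2,
    fun i j a ha b hb x => hρ.jacobi i j a b x ha.2 hb.2⟩

end TwistedRepresentation

variable (k : Type) [Field k] [CharZero k]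

theorem twisted_representation
    (P : Type) [AddCommGroup P] [Module k P]
    (D : P →ₗ[k] P) (par : ZMod 2 → Submodule k P)
    (Br Ml : P →ₗ[k] P →ₗ[k] (ℕ →₀ P))
    (hP : IsPoissonConfSuper k D par Br Ml)
    (L : Submodule k P) :
    IsConfRepOn k D par Br L D par (Br + Ml.compr₂ (lamMul k)) :=
  hP.isConfRep_twistedAction.isConfRepOn L
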